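/- Let r : ℝ → ℝ be bounded and measurable, let α ≥ 0, and let N ≥ 1. If the Gaussian objective J^b_α has at least one stationary point, then the N-component mixture objective J^m_α also has at least one stationary point, and sup{ J^m_α(θ) : θ a stationary point of J^m_α } ≥ sup{ J^b_α(μ, σ) : (μ, σ) a stationary point of J^b_α }, the suprema being taken in the extended real numbers. -/

import Mathlib

open MeasureTheory Real

/-- Gaussian density `φ(a; μ, σ) = (2πσ²)^(−1/2) · exp(−(a−μ)²/(2σ²))`. -/
noncomputable def gpdf (μ σ a : ℝ) : ℝ :=
  (Real.sqrt (2 * Real.pi * σ ^ 2))⁻¹ * Real.exp (-((a - μ) ^ 2) / (2 * σ ^ 2))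

/-- Entropy-regularized bandit objective under the Gaussian parameterization:
`J^b_α(μ, σ) = ∫ (r(a) − α·log φ(a; μ, σ)) · φ(a; μ, σ) da`. -/
noncomputable def Jb (r : ℝ → ℝ) (α μ σ : ℝ) : ℝ :=
  ∫ a, (r a - α * Real.log (gpdf μ σ a)) * gpdf μ σ a

/-- Softmax weights `w_k = exp(η_k) / Σ_j exp(η_j)`. -/
noncomputable def softmaxW {N : ℕ} (η : Fin N → ℝ) (k : Fin N) : ℝ :=
  Real.exp (η k) / ∑ j, Real.exp (η j)

/-- Mixture density with softmax weights:
`m(a) = Σ_k w_k · φ(a; μ_k, σ_k)`. -/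
noncomputable def mixDensity {N : ℕ} (μs σs η : Fin N → ℝ) (a : ℝ) : ℝ :=
  ∑ k, softmaxW η k * gpdf (μs k) (σs k) a

/-- Entropy-regularized bandit objective under the `N`-component mixture
parameterization. -/
noncomputable def Jm (r : ℝ → ℝ) (α : ℝ) {N : ℕ} (μs σs η : Fin N → ℝ) : ℝ :=
  ∫ a, (r a - α * Real.log (mixDensity μs σs η a)) * mixDensity μs σs η a

/-- `(μ, σ)` (with `σ > 0`) is a stationary point of `J^b_α`: both partial
derivatives exist and vanish. -/
def IsStatB (r : ℝ → ℝ) (α μ σ : ℝ) : Prop :=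
  0 < σ ∧
  (DifferentiableAt ℝ (fun x => Jb r α x σ) μ ∧ deriv (fun x => Jb r α x σ) μ = 0) ∧
  (DifferentiableAt ℝ (fun x => Jb r α μ x) σ ∧ deriv (fun x => Jb r α μ x) σ = 0)

/-- `(μs, σs, η)` (with all `σs k > 0`) is a stationary point of `J^m_α`: all
`3N` partial derivatives exist and vanish. -/
def IsStatM (r : ℝ → ℝ) (α : ℝ) {N : ℕ} (μs σs η : Fin N → ℝ) : Prop :=
  (∀ k, 0 < σs k) ∧
  ∀ k : Fin N,
    (DifferentiableAt ℝ (fun x => Jm r α (Function.update μs k x) σs η) (μs k) ∧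
      deriv (fun x => Jm r α (Function.update μs k x) σs η) (μs k) = 0) ∧
    (DifferentiableAt ℝ (fun x => Jm r α μs (Function.update σs k x) η) (σs k) ∧
      deriv (fun x => Jm r α μs (Function.update σs k x) η) (σs k) = 0) ∧
    (DifferentiableAt ℝ (fun x => Jm r α μs σs (Function.update η k x)) (η k) ∧
      deriv (fun x => Jm r α μs σs (Function.update η k x)) (η k) = 0)

/-!
Put every component of the mixture at a stationary point `(μ, σ)` of `J^b_α`. The mixture is then
the Gaussian `φ = φ(·; μ, σ)` itself, whatever the weights, so `J^m_α = J^b_α` there and the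
`η`-derivatives vanish. Moving component `k` to `(x, s)` gives the density `w p + (1 - w) φ` with
`w = w_k` and `p = φ(·; x, s)`. Concavity of `t ↦ c t - α t log t` squeezes `J_α(w p + (1 - w) φ)`
between `w J_α(p) + (1 - w) J_α(φ)` (Jensen) and `w (J_α(p) + α KL(p ‖ φ)) + (1 - w) J_α(φ)`
(tangent line at `φ`). Both bounds equal `J_α(φ)` at `p = φ` and have vanishing derivative there,
because `J^b_α` is stationary and the Gaussian KL divergence vanishes to second order; so the
`μ_k`- and `σ_k`-derivatives of `J^m_α` vanish as well.
-/

open Filter Topology Asymptotics ProbabilityTheory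
open scoped NNReal

theorem HasDerivAt.of_squeeze {f g h : ℝ → ℝ} {x₀ c : ℝ} (hg : HasDerivAt g c x₀)
    (hh : HasDerivAt h c x₀) (hgf : ∀ᶠ x in 𝓝 x₀, g x ≤ f x) (hfh : ∀ᶠ x in 𝓝 x₀, f x ≤ h x)
    (hg₀ : g x₀ = f x₀) (hh₀ : h x₀ = f x₀) : HasDerivAt f c x₀ := by
  rw [hasDerivAt_iff_isLittleO] at *
  refine IsBigO.trans_isLittleO (g := fun x => ‖g x - g x₀ - (x - x₀) • c‖
    + ‖h x - h x₀ - (x - x₀) • c‖) ?_ (hg.norm_left.add hh.norm_left)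
  refine IsBigO.of_bound' ?_
  filter_upwards [hgf, hfh] with x hgx hhx
  simp only [Real.norm_eq_abs, smul_eq_mul, hg₀, hh₀]
  exact (abs_le_max_abs_abs (by linarith) (by linarith)).trans
    ((max_le_add_of_nonneg (abs_nonneg _) (abs_nonneg _)).trans (le_abs_self _))

section Pointwise

variable {c α w t u : ℝ}

lemma mix_sub_log_mul_ge (hα : 0 ≤ α) (ht : 0 ≤ t) (hu : 0 ≤ u) (hw₀ : 0 ≤ w) (hw₁ : w ≤ 1) :
    w * ((c - α * log t) * t) + (1 - w) * ((c - α * log u) * u) ≤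
      (c - α * log (w * t + (1 - w) * u)) * (w * t + (1 - w) * u) := by
  have hconv := convexOn_mul_log.2 (Set.mem_Ici.2 ht) (Set.mem_Ici.2 hu) hw₀ (by linarith)
    (by ring : w + (1 - w) = 1)
  simp only [smul_eq_mul] at hconv
  nlinarith [mul_le_mul_of_nonneg_left hconv hα]

lemma sub_log_mul_le_tangent (hα : 0 ≤ α) (ht : 0 ≤ t) (hu : 0 < u) :
    (c - α * log t) * t ≤ (c - α * log u) * u + (c - α * log u - α) * (t - u) := by
  have key : t - u ≤ t * log t - t * log u := by
    rcases ht.eq_or_lt with rfl | ht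
    · simpa using hu.le
    have := mul_le_mul_of_nonneg_left (self_sub_one_le_mul_log (div_pos ht hu).le) hu.le
    rw [log_div ht.ne' hu.ne'] at this
    field_simp at this
    linarith
  nlinarith [mul_le_mul_of_nonneg_left key hα]

end Pointwise

/-- `J_α(p)` relative to `ν`; `Jb r α μ σ` and `Jm r α μs σs η` unfold to `entObj volume r α` of
`gpdf μ σ` and of `mixDensity μs σs η`. -/
noncomputable def entObj {X : Type*} [MeasurableSpace X] (ν : Measure X) (r : X → ℝ) (α : ℝ)
    (p : X → ℝ) : ℝ :=
  ∫ a, (r a - α * log (p a)) * p a ∂ν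

theorem entObj_mix_bounds {X : Type*} [MeasurableSpace X] {ν : Measure X} {r p q : X → ℝ}
    {α w : ℝ} (hα : 0 ≤ α) (hw₀ : 0 ≤ w) (hw₁ : w ≤ 1)
    (hr : Measurable r) (hpm : Measurable p) (hqm : Measurable q) (hp : ∀ a, 0 ≤ p a)
    (hq : ∀ a, 0 < q a) (hpi : Integrable p ν) (hqi : Integrable q ν)
    (hpq : ∫ a, p a ∂ν = ∫ a, q a ∂ν)
    (hJp : Integrable (fun a => (r a - α * log (p a)) * p a) ν)
    (hJq : Integrable (fun a => (r a - α * log (q a)) * q a) ν)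
    (hX : Integrable (fun a => (r a - α * log (q a)) * p a) ν) :
    w * entObj ν r α p + (1 - w) * entObj ν r α q ≤
      entObj ν r α (fun a => w * p a + (1 - w) * q a) ∧
    entObj ν r α (fun a => w * p a + (1 - w) * q a) ≤
      w * ∫ a, (r a - α * log (q a)) * p a ∂ν + (1 - w) * entObj ν r α q := by
  set m := fun a => w * p a + (1 - w) * q a
  have hlo : ∀ a, w * ((r a - α * log (p a)) * p a) + (1 - w) * ((r a - α * log (q a)) * q a)
      ≤ (r a - α * log (m a)) * m a := fun a =>
    mix_sub_log_mul_ge hα (hp a) (hq a).le hw₀ hw₁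
  have hhi : ∀ a, (r a - α * log (m a)) * m a ≤
      w * ((r a - α * log (q a)) * p a) + (1 - w) * ((r a - α * log (q a)) * q a)
        - α * w * (p a - q a) := fun a => by
    have hm : 0 ≤ m a := add_nonneg (mul_nonneg hw₀ (hp a)) (mul_nonneg (by linarith) (hq a).le)
    have := sub_log_mul_le_tangent (c := r a) hα hm (hq a)
    simp only [m] at this ⊢
    linarith
  have hJpw := hJp.const_mul w
  have hJqw := hJq.const_mul (1 - w)
  have hXw := hX.const_mul w
  have hpqw : Integrable (fun a => α * w * (p a - q a)) ν := (hpi.sub hqi).const_mul (α * w)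
  have hloi : Integrable (fun a => w * ((r a - α * log (p a)) * p a)
      + (1 - w) * ((r a - α * log (q a)) * q a)) ν := hJpw.add hJqw
  have hXqi : Integrable (fun a => w * ((r a - α * log (q a)) * p a)
      + (1 - w) * ((r a - α * log (q a)) * q a)) ν := hXw.add hJqw
  have hhii := hXqi.sub hpqw
  have hmi : Integrable (fun a => (r a - α * log (m a)) * m a) ν :=
    integrable_of_le_of_le (by fun_prop) (ae_of_all _ hlo) (ae_of_all _ hhi) hloi hhii
  constructor
  · calc w * entObj ν r α p + (1 - w) * entObj ν r α q
        = ∫ a, w * ((r a - α * log (p a)) * p a)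
            + (1 - w) * ((r a - α * log (q a)) * q a) ∂ν := by
          rw [integral_add hJpw hJqw, integral_const_mul, integral_const_mul, entObj, entObj]
      _ ≤ entObj ν r α m := integral_mono hloi hmi hlo
  · calc entObj ν r α m
        ≤ ∫ a, w * ((r a - α * log (q a)) * p a) + (1 - w) * ((r a - α * log (q a)) * q a)
            - α * w * (p a - q a) ∂ν := integral_mono hmi hhii hhi
      _ = w * ∫ a, (r a - α * log (q a)) * p a ∂ν + (1 - w) * entObj ν r α q := by
          rw [integral_sub hXqi hpqw, integral_add hXw hJqw, integral_const_mul,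
            integral_const_mul, integral_const_mul, integral_sub hpi hqi, hpq, sub_self, mul_zero,
            sub_zero, entObj]

lemma gpdf_eq_gaussianPDFReal (μ σ : ℝ) : gpdf μ σ = gaussianPDFReal μ (‖σ‖₊ ^ 2) := by
  ext a
  simp [gpdf, gaussianPDFReal, neg_div]

lemma gpdf_pos {μ σ : ℝ} (hσ : σ ≠ 0) (a : ℝ) : 0 < gpdf μ σ a := by
  rw [gpdf_eq_gaussianPDFReal]
  exact gaussianPDFReal_pos _ _ _ (by simpa using hσ)

lemma measurable_gpdf (μ σ : ℝ) : Measurable (gpdf μ σ) := by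
  rw [gpdf_eq_gaussianPDFReal]
  exact measurable_gaussianPDFReal _ _

lemma integral_mul_gpdf {μ σ : ℝ} (hσ : σ ≠ 0) (f : ℝ → ℝ) :
    ∫ a, f a * gpdf μ σ a = ∫ a, f a ∂gaussianReal μ (‖σ‖₊ ^ 2) := by
  rw [integral_gaussianReal_eq_integral_smul (by simpa using hσ), gpdf_eq_gaussianPDFReal]
  simp_rw [smul_eq_mul, mul_comm]

lemma integrable_mul_gpdf_iff {μ σ : ℝ} (hσ : σ ≠ 0) {f : ℝ → ℝ} :
    Integrable (fun a => f a * gpdf μ σ a) ↔ Integrable f (gaussianReal μ (‖σ‖₊ ^ 2)) := by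
  rw [gaussianReal_of_var_ne_zero _ (by simpa using hσ),
    integrable_withDensity_iff_integrable_smul' (measurable_gaussianPDF _ _)
      (ae_of_all _ fun _ => gaussianPDF_lt_top)]
  simp_rw [toReal_gaussianPDF, gpdf_eq_gaussianPDFReal, smul_eq_mul, mul_comm]

lemma integral_gpdf {μ σ : ℝ} (hσ : σ ≠ 0) : ∫ a, gpdf μ σ a = 1 := by
  rw [gpdf_eq_gaussianPDFReal]
  exact integral_gaussianPDFReal_eq_one _ (by simpa using hσ)

lemma integrable_gpdf (μ σ : ℝ) : Integrable (gpdf μ σ) := by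
  rw [gpdf_eq_gaussianPDFReal]
  exact integrable_gaussianPDFReal _ _

lemma integrable_sq_sub_gaussianReal (μ c : ℝ) (v : ℝ≥0) :
    Integrable (fun a => (a - c) ^ 2) (gaussianReal μ v) :=
  ((memLp_id_gaussianReal 2).sub (memLp_const c)).integrable_sq

lemma integral_sq_sub_gaussianReal (μ c : ℝ) (v : ℝ≥0) :
    ∫ a, (a - c) ^ 2 ∂gaussianReal μ v = v + (μ - c) ^ 2 := by
  have hX : MemLp (fun a => a - c) 2 (gaussianReal μ v) :=
    (memLp_id_gaussianReal 2).sub (memLp_const c)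
  have hvar : Var[fun a => a - c; gaussianReal μ v] = v := by
    rw [variance_sub_const measurable_id'.aestronglyMeasurable, variance_fun_id_gaussianReal]
  have hmean : ∫ a, (a - c) ∂gaussianReal μ v = μ - c := by
    rw [integral_sub (f := fun a => a) ((memLp_id_gaussianReal 1).integrable le_rfl)
      (integrable_const c)]
    simp [integral_id_gaussianReal]
  rw [variance_eq_sub hX, hmean] at hvar
  simp only [Pi.pow_apply] at hvar
  linarith

lemma log_gpdf {μ σ : ℝ} (hσ : σ ≠ 0) (a : ℝ) :
    log (gpdf μ σ a) = -log √(2 * π * σ ^ 2) - (a - μ) ^ 2 / (2 * σ ^ 2) := by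
  rw [gpdf, log_mul (by positivity) (exp_ne_zero _), log_inv, log_exp]
  ring

lemma sub_log_gpdf_eq {μ σ : ℝ} (hσ : σ ≠ 0) (c α a : ℝ) :
    c - α * log (gpdf μ σ a) =
      c + α * log √(2 * π * σ ^ 2) + α / (2 * σ ^ 2) * (a - μ) ^ 2 := by
  rw [log_gpdf hσ]
  ring

lemma integrable_sub_log_gpdf_mul_gpdf {r : ℝ → ℝ} {α x s μ σ : ℝ} (hs : s ≠ 0) (hσ : σ ≠ 0)
    (hr : Integrable r (gaussianReal x (‖s‖₊ ^ 2))) :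
    Integrable (fun a => (r a - α * log (gpdf μ σ a)) * gpdf x s a) := by
  rw [integrable_mul_gpdf_iff hs]
  simp_rw [sub_log_gpdf_eq hσ]
  exact (hr.add (integrable_const _)).add ((integrable_sq_sub_gaussianReal _ _ _).const_mul _)

lemma integral_sub_log_gpdf_mul_gpdf {r : ℝ → ℝ} {α x s μ σ : ℝ} (hs : s ≠ 0) (hσ : σ ≠ 0)
    (hr : Integrable r (gaussianReal x (‖s‖₊ ^ 2))) :
    ∫ a, (r a - α * log (gpdf μ σ a)) * gpdf x s a = ∫ a, r a ∂gaussianReal x (‖s‖₊ ^ 2)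
      + α * (log √(2 * π * σ ^ 2) + (s ^ 2 + (x - μ) ^ 2) / (2 * σ ^ 2)) := by
  have h₁ : Integrable (fun a => r a + α * log √(2 * π * σ ^ 2)) (gaussianReal x (‖s‖₊ ^ 2)) :=
    hr.add (integrable_const _)
  have h₂ : Integrable (fun a => α / (2 * σ ^ 2) * (a - μ) ^ 2) (gaussianReal x (‖s‖₊ ^ 2)) :=
    (integrable_sq_sub_gaussianReal _ _ _).const_mul _
  rw [integral_mul_gpdf hs]
  simp_rw [sub_log_gpdf_eq hσ]
  rw [integral_add h₁ h₂, integral_add hr (integrable_const _), integral_const_mul (α / _),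
    integral_sq_sub_gaussianReal]
  simp only [integral_const, probReal_univ, smul_eq_mul, one_mul, NNReal.coe_pow, coe_nnnorm,
    norm_eq_abs, sq_abs]
  ring

lemma log_sqrt_two_pi_mul_sq {σ : ℝ} (hσ : 0 < σ) :
    log √(2 * π * σ ^ 2) = log √(2 * π) + log σ := by
  rw [sqrt_mul (by positivity), sqrt_sq hσ.le, log_mul (by positivity) hσ.ne']

/-- `KL(N(x, s²) ‖ N(μ, σ²))` for `s, σ > 0`. -/
noncomputable def gaussianKL (x s μ σ : ℝ) : ℝ :=
  log σ - log s + (s ^ 2 + (x - μ) ^ 2) / (2 * σ ^ 2) - 1 / 2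

lemma integral_sub_log_gpdf_mul_gpdf_eq {r : ℝ → ℝ} {α x s μ σ : ℝ} (hs : 0 < s) (hσ : 0 < σ)
    (hr : Integrable r (gaussianReal x (‖s‖₊ ^ 2))) :
    ∫ a, (r a - α * log (gpdf μ σ a)) * gpdf x s a = Jb r α x s + α * gaussianKL x s μ σ := by
  rw [Jb, integral_sub_log_gpdf_mul_gpdf hs.ne' hσ.ne' hr,
    integral_sub_log_gpdf_mul_gpdf hs.ne' hs.ne' hr, log_sqrt_two_pi_mul_sq hs,
    log_sqrt_two_pi_mul_sq hσ, gaussianKL]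
  field_simp
  ring

theorem entObj_gpdf_mix_bounds {r : ℝ → ℝ} {α w x s μ σ : ℝ} (hα : 0 ≤ α) (hw₀ : 0 ≤ w)
    (hw₁ : w ≤ 1) (hs : 0 < s) (hσ : 0 < σ) (hr : Measurable r)
    (hrp : Integrable r (gaussianReal x (‖s‖₊ ^ 2)))
    (hrq : Integrable r (gaussianReal μ (‖σ‖₊ ^ 2))) :
    w * Jb r α x s + (1 - w) * Jb r α μ σ ≤
      entObj volume r α (fun a => w * gpdf x s a + (1 - w) * gpdf μ σ a) ∧
    entObj volume r α (fun a => w * gpdf x s a + (1 - w) * gpdf μ σ a) ≤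
      w * (Jb r α x s + α * gaussianKL x s μ σ) + (1 - w) * Jb r α μ σ := by
  rw [← integral_sub_log_gpdf_mul_gpdf_eq hs hσ hrp]
  exact entObj_mix_bounds hα hw₀ hw₁ hr (measurable_gpdf x s) (measurable_gpdf μ σ)
    (fun a => (gpdf_pos hs.ne' a).le) (gpdf_pos hσ.ne') (integrable_gpdf x s) (integrable_gpdf μ σ)
    (by rw [integral_gpdf hs.ne', integral_gpdf hσ.ne'])
    (integrable_sub_log_gpdf_mul_gpdf hs.ne' hs.ne' hrp)
    (integrable_sub_log_gpdf_mul_gpdf hσ.ne' hσ.ne' hrq)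
    (integrable_sub_log_gpdf_mul_gpdf hs.ne' hσ.ne' hrp)

lemma gaussianKL_self {σ : ℝ} (hσ : σ ≠ 0) (μ : ℝ) : gaussianKL μ σ μ σ = 0 := by
  rw [gaussianKL, sub_self, sub_self]
  field_simp
  ring

lemma hasDerivAt_gaussianKL_mean (μ σ : ℝ) : HasDerivAt (fun x => gaussianKL x σ μ σ) 0 μ := by
  have := (((hasDerivAt_id μ).sub_const μ).pow 2).const_add (σ ^ 2) |>.div_const (2 * σ ^ 2)
    |>.const_add (log σ - log σ) |>.sub_const (1 / 2)
  simpa [gaussianKL, add_sub_assoc] using this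

lemma hasDerivAt_gaussianKL_std {σ : ℝ} (hσ : 0 < σ) (μ : ℝ) :
    HasDerivAt (fun s => gaussianKL μ s μ σ) 0 σ := by
  have h := ((hasDerivAt_log hσ.ne').const_sub (log σ)).add
    (((hasDerivAt_pow 2 σ).add_const ((μ - μ) ^ 2)).div_const (2 * σ ^ 2)) |>.sub_const (1 / 2)
  have h₀ : -σ⁻¹ + ((2 : ℕ) * σ ^ (2 - 1) : ℝ) / (2 * σ ^ 2) = 0 := by
    field_simp
    ring
  rw [h₀] at h
  exact h

theorem hasDerivAt_entObj_gpdf_mix {r : ℝ → ℝ} {α w μ σ t₀ : ℝ} {x s : ℝ → ℝ} (hα : 0 ≤ α)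
    (hw₀ : 0 ≤ w) (hw₁ : w ≤ 1) (hσ : 0 < σ) (hr : Measurable r)
    (hri : ∀ m v, Integrable r (gaussianReal m v)) (hs : ∀ᶠ t in 𝓝 t₀, 0 < s t)
    (hx₀ : x t₀ = μ) (hs₀ : s t₀ = σ) (hJ : HasDerivAt (fun t => Jb r α (x t) (s t)) 0 t₀)
    (hKL : HasDerivAt (fun t => gaussianKL (x t) (s t) μ σ) 0 t₀) :
    HasDerivAt (fun t => entObj volume r α
      (fun a => w * gpdf (x t) (s t) a + (1 - w) * gpdf μ σ a)) 0 t₀ := by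
  have hbounds : ∀ᶠ t in 𝓝 t₀, _ := hs.mono fun t ht =>
    entObj_gpdf_mix_bounds (x := x t) (μ := μ) hα hw₀ hw₁ ht hσ hr (hri _ _) (hri _ _)
  have hmix₀ : entObj volume r α (fun a => w * gpdf (x t₀) (s t₀) a + (1 - w) * gpdf μ σ a)
      = Jb r α μ σ := by
    simp only [hx₀, hs₀, ← add_mul, add_sub_cancel, one_mul]
    rfl
  refine HasDerivAt.of_squeeze (by simpa using (hJ.const_mul w).add_const ((1 - w) * Jb r α μ σ))
    (by simpa using ((hJ.add (hKL.const_mul α)).const_mul w).add_const ((1 - w) * Jb r α μ σ))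
    (hbounds.mono fun _ h => h.1) (hbounds.mono fun _ h => h.2) ?_ ?_
  · rw [hmix₀, hx₀, hs₀]
    ring
  · rw [hmix₀, hx₀, hs₀, gaussianKL_self hσ.ne']
    ring

lemma sum_softmaxW {N : ℕ} [Nonempty (Fin N)] (η : Fin N → ℝ) : ∑ k, softmaxW η k = 1 := by
  simp_rw [softmaxW, ← Finset.sum_div]
  exact div_self (Finset.sum_pos (fun j _ => exp_pos (η j)) Finset.univ_nonempty).ne'

lemma softmaxW_nonneg {N : ℕ} (η : Fin N → ℝ) (k : Fin N) : 0 ≤ softmaxW η k := by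
  unfold softmaxW
  positivity

lemma softmaxW_le_one {N : ℕ} (η : Fin N → ℝ) (k : Fin N) : softmaxW η k ≤ 1 := by
  have : Nonempty (Fin N) := ⟨k⟩
  rw [← sum_softmaxW η]
  exact Finset.single_le_sum (fun j _ => softmaxW_nonneg η j) (Finset.mem_univ k)

lemma mixDensity_eq_of_forall_ne {N : ℕ} {μs σs : Fin N → ℝ} (η : Fin N → ℝ) {k : Fin N}
    {μ σ : ℝ} (hμ : ∀ j ≠ k, μs j = μ) (hσ : ∀ j ≠ k, σs j = σ) (a : ℝ) :
    mixDensity μs σs η a =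
      softmaxW η k * gpdf (μs k) (σs k) a + (1 - softmaxW η k) * gpdf μ σ a := by
  have : Nonempty (Fin N) := ⟨k⟩
  have hterm : ∀ j, softmaxW η j * gpdf (μs j) (σs j) a = softmaxW η j * gpdf μ σ a
      + if j = k then softmaxW η k * (gpdf (μs k) (σs k) a - gpdf μ σ a) else 0 := by
    intro j
    rcases eq_or_ne j k with rfl | hj
    · simp only [if_true]
      ring
    · simp [hμ j hj, hσ j hj, hj]
  rw [mixDensity, Finset.sum_congr rfl fun j _ => hterm j, Finset.sum_add_distrib,
    ← Finset.sum_mul, sum_softmaxW, Finset.sum_ite_eq']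
  simp only [Finset.mem_univ, if_true]
  ring

lemma Jm_const {N : ℕ} [Nonempty (Fin N)] (r : ℝ → ℝ) (α μ σ : ℝ) (η : Fin N → ℝ) :
    Jm r α (fun _ => μ) (fun _ => σ) η = Jb r α μ σ := by
  simp only [Jm, Jb, mixDensity, ← Finset.sum_mul, sum_softmaxW, one_mul]

theorem isStatM_const_of_isStatB {r : ℝ → ℝ} {α μ σ : ℝ} {N : ℕ} (hα : 0 ≤ α)
    (hr : Measurable r) (hri : ∀ m v, Integrable r (gaussianReal m v)) (h : IsStatB r α μ σ)
    (η : Fin N → ℝ) :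
    IsStatM r α (fun _ => μ) (fun _ => σ) η := by
  obtain ⟨hσ, ⟨hdμ, hμ0⟩, hdσ, hσ0⟩ := h
  refine ⟨fun _ => hσ, fun k => ?_⟩
  have : Nonempty (Fin N) := ⟨k⟩
  have hmix : ∀ x s,
      Jm r α (Function.update (fun _ => μ) k x) (Function.update (fun _ => σ) k s) η =
        entObj volume r α
          (fun a => softmaxW η k * gpdf x s a + (1 - softmaxW η k) * gpdf μ σ a) := by
    intro x s
    refine congrArg (entObj volume r α) (funext fun a => ?_)
    rw [mixDensity_eq_of_forall_ne η (μ := μ) (σ := σ) (fun j hj => Function.update_of_ne hj _ _)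
      (fun j hj => Function.update_of_ne hj _ _), Function.update_self, Function.update_self]
  have hmean :
      HasDerivAt (fun x => Jm r α (Function.update (fun _ => μ) k x) (fun _ => σ) η) 0 μ := by
    have h := hasDerivAt_entObj_gpdf_mix (x := fun t => t) (s := fun _ => σ) hα
      (softmaxW_nonneg η k) (softmaxW_le_one η k) hσ hr hri (.of_forall fun _ => hσ) rfl rfl
      (hμ0 ▸ hdμ.hasDerivAt) (hasDerivAt_gaussianKL_mean μ σ)
    simpa only [← hmix, Function.update_eq_self] using h
  have hstd :
      HasDerivAt (fun s => Jm r α (fun _ => μ) (Function.update (fun _ => σ) k s) η) 0 σ := by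
    have h := hasDerivAt_entObj_gpdf_mix (x := fun _ => μ) (s := fun t => t) hα
      (softmaxW_nonneg η k) (softmaxW_le_one η k) hσ hr hri (lt_mem_nhds hσ) rfl rfl
      (hσ0 ▸ hdσ.hasDerivAt) (hasDerivAt_gaussianKL_std hσ μ)
    simpa only [← hmix, Function.update_eq_self] using h
  have hweight : (fun x => Jm r α (fun _ => μ) (fun _ => σ) (Function.update η k x)) =
      fun _ => Jb r α μ σ :=
    funext fun _ => Jm_const r α μ σ _
  refine ⟨⟨hmean.differentiableAt, hmean.deriv⟩, ⟨hstd.differentiableAt, hstd.deriv⟩, ?_⟩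
  simp only [hweight, differentiableAt_const, deriv_const', and_self]

/-- if the Gaussian objective has a stationary point, so does the
`N`-component mixture objective, and the best stationary value of the mixture
objective is at least that of the Gaussian objective (suprema in `EReal`). -/
theorem stmt4 (r : ℝ → ℝ) (hmeas : Measurable r) (C : ℝ) (hbd : ∀ a, |r a| ≤ C)
    (α : ℝ) (hα : 0 ≤ α) (N : ℕ) (hN : 1 ≤ N)
    (hex : ∃ μ σ : ℝ, IsStatB r α μ σ) :
    (∃ μs σs η : Fin N → ℝ, IsStatM r α μs σs η) ∧
    sSup {x : EReal | ∃ μ σ : ℝ, IsStatB r α μ σ ∧ x = (Jb r α μ σ : EReal)} ≤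
      sSup {x : EReal |
        ∃ μs σs η : Fin N → ℝ, IsStatM r α μs σs η ∧ x = (Jm r α μs σs η : EReal)} := by
  have hri : ∀ m v, Integrable r (gaussianReal m v) := fun m v =>
    .of_bound hmeas.aestronglyMeasurable C
      (ae_of_all _ fun a => (norm_eq_abs (r a)).trans_le (hbd a))
  have : Nonempty (Fin N) := ⟨⟨0, hN⟩⟩
  obtain ⟨μ₀, σ₀, h₀⟩ := hex
  refine ⟨⟨_, _, 0, isStatM_const_of_isStatB hα hmeas hri h₀ 0⟩, sSup_le_sSup ?_⟩
  rintro _ ⟨μ, σ, h, rfl⟩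
  exact ⟨_, _, 0, isStatM_const_of_isStatB hα hmeas hri h 0, by rw [Jm_const]⟩
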